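/- arXiv:1512.04596 — 2 statements merged into one kernel-verified Lean document; each statement's English description precedes it below -/
import Mathlib

section
/- Let (Ω, F, P, θ) be a stationary ergodic quadruple carrying σ, τ as in the context and let p ≥ 1. If P(Z_1 = 0) > 0, then the solution to the equation Y∘θ = Ψ^p(Y) P-a.s. is unique: any two measurable, almost surely finite Ō_p-valued random vectors Y and Y' satisfying Y∘θ = Ψ^p(Y) a.s. and Y'∘θ = Ψ^p(Y') a.s. coincide almost surely. -/
open MeasureTheory ProbabilityTheory Filter

noncomputable section

/-- Positive part `[x]⁺ = max(x,0)`. -/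
def pos (x : ℝ) : ℝ := max x 0

/-- Nondecreasing rearrangement of a finite real vector. -/
def sortVec {n : ℕ} (u : Fin n → ℝ) : Fin n → ℝ := u ∘ Tuple.sort u

/-- `u` belongs to `Ō_n`: nonnegative and nondecreasing coordinates. -/
def OSorted {n : ℕ} (u : Fin n → ℝ) : Prop := (∀ i, 0 ≤ u i) ∧ Monotone u

/-- Two-sided iterates `θ^n`, `n ∈ ℤ`, of a measurable bijection. -/
def iterZ {Ω : Type*} [MeasurableSpace Ω] (θ : Ω ≃ᵐ Ω) : ℤ → Ω → Ω
  | Int.ofNat n => (⇑θ)^[n]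
  | Int.negSucc n => (⇑θ.symm)^[n + 1]

/-- The term `σ∘θ^{-k} − Σ_{i=1}^k τ∘θ^{-i}` (here `θinv = θ⁻¹`). -/
def Zterm {Ω : Type*} (θinv : Ω → Ω) (σ τ : Ω → ℝ) (k : ℕ) (ω : Ω) : ℝ :=
  σ (θinv^[k] ω) - ∑ i ∈ Finset.Icc 1 k, τ (θinv^[i] ω)

/-- `Z_ℓ = [sup_{k ≥ ℓ} (σ∘θ^{-k} − Σ_{i=1}^k τ∘θ^{-i})]⁺`. -/
def Zfam {Ω : Type*} (θinv : Ω → Ω) (σ τ : Ω → ℝ) (ℓ : ℕ) (ω : Ω) : ℝ :=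
  pos (⨆ k : {k : ℕ // ℓ ≤ k}, Zterm θinv σ τ (k : ℕ) ω)

/-- GI/GI input: the doubly infinite sequences `(σ∘θ^n)` and `(τ∘θ^n)` are
jointly independent, and each is identically distributed. -/
def GIGI {Ω : Type*} [MeasurableSpace Ω] (μ : Measure Ω) (θ : Ω ≃ᵐ Ω) (σ τ : Ω → ℝ) : Prop :=
  iIndepFun
    (fun x : ℤ × Bool => fun ω => if x.2 then σ (iterZ θ x.1 ω) else τ (iterZ θ x.1 ω)) μ
  ∧ (∀ n : ℤ, IdentDistrib (fun ω => σ (iterZ θ n ω)) σ μ μ)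
  ∧ (∀ n : ℤ, IdentDistrib (fun ω => τ (iterZ θ n ω)) τ μ μ)

/-- The distribution of `τ` has unbounded support. -/
def UnboundedSupport {Ω : Type*} [MeasurableSpace Ω] (μ : Measure Ω) (τ : Ω → ℝ) : Prop :=
  ∀ M : ℝ, 0 < M → 0 < μ {ω | M < τ ω}

/-- The Kiefer–Wolfowitz map `G(u) = sorted [u + σe₁ − τ𝟙]⁺`. -/
def Gmap (S : ℕ) (σ τ : ℝ) (u : Fin S → ℝ) : Fin S → ℝ :=
  sortVec fun i => pos (u i + (if (i : ℕ) = 0 then σ else 0) - τ)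

/-- The map `G^p` driving the J_{p+1}SW service profile. -/
def Gp (S p : ℕ) (hS : 0 < S) (σ τ : ℝ) (u : Fin S → ℝ) : Fin S → ℝ :=
  if u ⟨0, hS⟩ = 0 then Gmap S σ τ u
  else sortVec fun i => pos (u i + (if (i : ℕ) = p then σ else 0) - τ)

/-- The map `Γ^p`. -/
def Gamma (p : ℕ) (σ τ : ℝ) (u : Fin p → ℝ) : Fin p → ℝ := fun j =>
  if h : (j : ℕ) + 1 < p then pos (u ⟨(j : ℕ) + 1, h⟩ - τ) else pos (max (u j) σ - τ)

/-- The map `Ψ^p`. -/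
def Psi (p : ℕ) (σ τ : ℝ) (u : Fin p → ℝ) : Fin p → ℝ := fun j =>
  if h : (j : ℕ) + 1 < p then pos (min (max (u j) σ) (u ⟨(j : ℕ) + 1, h⟩) - τ)
  else pos (max (u j) σ - τ)

/-- The map `Φ^p` on `Ō_S` (with `1 ≤ p < S`). -/
def Phi (S p : ℕ) (hp : p < S) (σ τ : ℝ) (u : Fin S → ℝ) : Fin S → ℝ := fun j =>
  let ind : ℝ := if 0 < u ⟨0, Nat.lt_of_le_of_lt (Nat.zero_le p) hp⟩ then u ⟨p, hp⟩ else 0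
  if h : (j : ℕ) + 1 < S then
    if (j : ℕ) < p then pos (min (max (u j) σ) (u ⟨(j : ℕ) + 1, h⟩) - τ)
    else pos (min (max (u j) (σ + ind)) (u ⟨(j : ℕ) + 1, h⟩) - τ)
  else pos (max (u j) (σ + ind) - τ)

/-- The loss-system map `H^p(u) = sorted [u + σ·1_{u(1)=0}e₁ − τ𝟙]⁺`. -/
def Hmap (p : ℕ) (hp : 0 < p) (σ τ : ℝ) (u : Fin p → ℝ) : Fin p → ℝ :=
  sortVec fun i => pos (u i + (if (i : ℕ) = 0 ∧ u ⟨0, hp⟩ = 0 then σ else 0) - τ)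

end

/-!
The last coordinate `V` of a solution solves the Lindley recursion `V ∘ θ = [max(V, σ) − τ]⁺`.
Every nonnegative solution dominates `Z₁` (unroll the recursion along the backward orbit), and
`Z₁` is a subsolution, so `V − Z₁` does not increase along `θ`. Under a finite measure-preserving
map such a function is a.e. invariant, and on `{Z₁ = 0}` the invariance of `V − Z₁` forces
`V = 0` because `τ > 0`. The other coordinates lie between `0` and `V`, so every solution
vanishes on `{Z₁ = 0}`. Finally `Ψ^p` is 1-Lipschitz for the sup distance, so `dist(Y, Y')` is
invariant as well, hence a.e. constant by ergodicity, and the constant is `0` since `{Z₁ = 0}`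
has positive measure.
-/

open Function

lemma pos_max_sub_pos_max_le {a b s t : ℝ} (h : b ≤ a) :
    pos (max a s - t) - pos (max b s - t) ≤ a - b := by
  simp only [pos, max_def]
  split_ifs <;> linarith

lemma eq_zero_of_le_pos_sub_pos {v s t : ℝ} (hv : 0 ≤ v) (ht : 0 < t)
    (h : v ≤ pos (max v s - t) - pos (max 0 s - t)) : v = 0 := by
  simp only [pos, max_def] at h
  split_ifs at h <;> linarith

lemma dist_Psi_le (p : ℕ) (s t : ℝ) (u v : Fin p → ℝ) :
    dist (Psi p s t u) (Psi p s t v) ≤ dist u v := by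
  refine (dist_pi_le_iff dist_nonneg).2 fun j => ?_
  have hpos : ∀ x y : ℝ, dist (pos (x - t)) (pos (y - t)) ≤ |x - y| := fun x y => by
    simpa [Real.dist_eq, pos] using abs_max_sub_max_le_abs (x - t) (y - t) 0
  have hmax : |max (u j) s - max (v j) s| ≤ dist u v :=
    (abs_max_sub_max_le_abs _ _ _).trans (dist_le_pi_dist u v j)
  unfold Psi
  split_ifs
  · exact (hpos _ _).trans <| (abs_min_sub_min_le_max _ _ _ _).trans
      (max_le hmax (dist_le_pi_dist u v _))
  · exact (hpos _ _).trans hmax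

lemma Psi_last (n : ℕ) (s t : ℝ) (u : Fin (n + 1) → ℝ) :
    Psi (n + 1) s t u (Fin.last n) = pos (max (u (Fin.last n)) s - t) := by
  simp [Psi]

namespace MeasureTheory.MeasurePreserving

variable {α : Type*} [MeasurableSpace α] {μ : Measure α} [IsFiniteMeasure μ] {f : α → α}

theorem comp_ae_eq_of_comp_ae_le (hf : MeasurePreserving f μ μ) {g : α → ℝ}
    (hg : AEStronglyMeasurable g μ) (h : g ∘ f ≤ᵐ[μ] g) : g ∘ f =ᵐ[μ] g := by
  -- `arctan ∘ g` is bounded, hence integrable, and `f` preserves its integral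
  have hbdd : ∀ x, ‖Real.arctan x‖ ≤ Real.pi / 2 := fun x => by
    rw [Real.norm_eq_abs, abs_le]
    exact ⟨(Real.neg_pi_div_two_lt_arctan x).le, (Real.arctan_lt_pi_div_two x).le⟩
  have hag : AEStronglyMeasurable (Real.arctan ∘ g) μ :=
    Real.continuous_arctan.comp_aestronglyMeasurable hg
  have hint : Integrable (Real.arctan ∘ g) μ := .of_bound hag _ (ae_of_all _ fun _ => hbdd _)
  have hintf : Integrable (Real.arctan ∘ g ∘ f) μ :=
    .of_bound (hag.comp_measurePreserving hf) _ (ae_of_all _ fun _ => hbdd _)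
  have heq : ∫ x, (Real.arctan ∘ g) (f x) ∂μ = ∫ x, (Real.arctan ∘ g) x ∂μ := by
    rw [← integral_map hf.aemeasurable (by rwa [hf.map_eq]), hf.map_eq]
  have hae := (integral_eq_iff_of_ae_le hintf hint
    (h.mono fun _ hx => Real.arctan_strictMono.monotone hx)).1 heq
  exact hae.mono fun _ hx => Real.arctan_injective hx

end MeasureTheory.MeasurePreserving

section Zterm

variable {Ω : Type*} (T : Ω → Ω) (σ τ : Ω → ℝ)

lemma Zterm_zero (ω : Ω) : Zterm T σ τ 0 ω = σ ω := by
  simp [Zterm]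

lemma Zterm_succ (k : ℕ) (ω : Ω) : Zterm T σ τ (k + 1) ω = Zterm T σ τ k (T ω) - τ (T ω) := by
  have hsum : ∀ k : ℕ, ∑ i ∈ Finset.Icc 1 (k + 1), τ (T^[i] ω)
      = τ (T ω) + ∑ i ∈ Finset.Icc 1 k, τ (T^[i] (T ω)) := by
    intro k
    induction k with
    | zero => simp
    | succ k ih =>
      rw [Finset.sum_Icc_succ_top (by omega), ih, Finset.sum_Icc_succ_top (by omega),
        iterate_succ_apply, add_assoc]
  simp only [Zterm, iterate_succ_apply, hsum]
  ring

lemma Zterm_succ_le_of_backward_orbit {V : Ω → ℝ} {ω : Ω}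
    (hV : ∀ n, V (T^[n] ω) = pos (max (V (T^[n + 1] ω)) (σ (T^[n + 1] ω)) - τ (T^[n + 1] ω)))
    (k : ℕ) : Zterm T σ τ (k + 1) ω ≤ V ω := by
  have step : ∀ k n, Zterm T σ τ k (T^[n + 1] ω) ≤ max (V (T^[n + 1] ω)) (σ (T^[n + 1] ω)) →
      Zterm T σ τ (k + 1) (T^[n] ω) ≤ V (T^[n] ω) := fun k n h => by
    rw [Zterm_succ, ← iterate_succ_apply' T n, hV n]
    exact (sub_le_sub_right h _).trans (le_max_left _ _)
  have hmax : ∀ k n, Zterm T σ τ k (T^[n] ω) ≤ max (V (T^[n] ω)) (σ (T^[n] ω)) := by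
    intro k
    induction k with
    | zero => exact fun n => (Zterm_zero T σ τ _).trans_le (le_max_right _ _)
    | succ k ih => exact fun n => (step k n (ih (n + 1))).trans (le_max_left _ _)
  exact step k 0 (hmax k 1)

lemma Zfam_one_le_of_Zterm_succ_le {V : Ω → ℝ} {ω : Ω} (hV0 : 0 ≤ V ω)
    (hV : ∀ k, Zterm T σ τ (k + 1) ω ≤ V ω) : Zfam T σ τ 1 ω ≤ V ω := by
  have : Nonempty {k : ℕ // 1 ≤ k} := ⟨⟨1, le_rfl⟩⟩
  refine max_le (ciSup_le fun ⟨k, hk⟩ => ?_) hV0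
  obtain ⟨k, rfl⟩ := Nat.exists_eq_add_of_le' hk
  exact hV k

lemma pos_max_Zfam_sub_le_Zfam {x : Ω}
    (hbdd : BddAbove (Set.range fun k : {k : ℕ // 1 ≤ k} => Zterm T σ τ k x)) (hτ : 0 ≤ τ (T x)) :
    pos (max (Zfam T σ τ 1 (T x)) (σ (T x)) - τ (T x)) ≤ Zfam T σ τ 1 x := by
  have : Nonempty {k : ℕ // 1 ≤ k} := ⟨⟨1, le_rfl⟩⟩
  set S := ⨆ k : {k : ℕ // 1 ≤ k}, Zterm T σ τ k x
  have hS : ∀ k, Zterm T σ τ k (T x) - τ (T x) ≤ S := fun k => by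
    rw [← Zterm_succ]
    exact le_ciSup hbdd ⟨k + 1, by omega⟩
  have hσS : σ (T x) - τ (T x) ≤ S := by simpa [Zterm_zero] using hS 0
  have hST : ⨆ k : {k : ℕ // 1 ≤ k}, Zterm T σ τ k (T x) ≤ S + τ (T x) :=
    ciSup_le fun k => by linarith [hS k]
  have hSZ : S ≤ Zfam T σ τ 1 x := le_max_left _ _
  have hZ0 : 0 ≤ Zfam T σ τ 1 x := le_max_right _ _
  refine max_le (sub_le_iff_le_add.2 (max_le (max_le ?_ ?_) ?_)) hZ0 <;> linarith

end Zterm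
section Lindley

variable {Ω : Type*} [MeasurableSpace Ω] {μ : Measure Ω} {θ : Ω ≃ᵐ Ω} {σ τ : Ω → ℝ}

lemma aemeasurable_Zfam (hθ : MeasurePreserving θ μ μ) (hσ : AEMeasurable σ μ)
    (hτ : AEMeasurable τ μ) (ℓ : ℕ) : AEMeasurable (Zfam θ.symm σ τ ℓ) μ := by
  have hT : ∀ k, Measure.QuasiMeasurePreserving (θ.symm^[k]) μ μ :=
    fun k => ((hθ.symm θ).iterate k).quasiMeasurePreserving
  refine (AEMeasurable.iSup fun k => ?_).max aemeasurable_const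
  exact (hσ.comp_quasiMeasurePreserving (hT k)).sub
    (Finset.aemeasurable_fun_sum _ fun i _ => hτ.comp_quasiMeasurePreserving (hT i))

variable {V : Ω → ℝ}

lemma ae_Zterm_succ_le (hθ : MeasurePreserving θ μ μ)
    (hVr : ∀ᵐ ω ∂μ, V (θ ω) = pos (max (V ω) (σ ω) - τ ω)) :
    ∀ᵐ ω ∂μ, ∀ k, Zterm θ.symm σ τ (k + 1) ω ≤ V ω := by
  have horbit : ∀ n, ∀ᵐ ω ∂μ, V (θ.symm^[n] ω) = pos (max (V (θ.symm^[n + 1] ω))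
      (σ (θ.symm^[n + 1] ω)) - τ (θ.symm^[n + 1] ω)) := fun n => by
    filter_upwards [((hθ.symm θ).iterate (n + 1)).quasiMeasurePreserving.ae hVr] with ω h
    simpa only [iterate_succ_apply', θ.apply_symm_apply] using h
  filter_upwards [ae_all_iff.2 horbit] with ω h
  exact Zterm_succ_le_of_backward_orbit _ σ τ h

theorem ae_eq_zero_of_Zfam_eq_zero [IsFiniteMeasure μ] (hθ : MeasurePreserving θ μ μ)
    (hσ : AEMeasurable σ μ) (hτ : AEMeasurable τ μ) (hτ0 : ∀ᵐ ω ∂μ, 0 < τ ω)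
    (hV : AEMeasurable V μ) (hV0 : ∀ᵐ ω ∂μ, 0 ≤ V ω)
    (hVr : ∀ᵐ ω ∂μ, V (θ ω) = pos (max (V ω) (σ ω) - τ ω)) :
    ∀ᵐ ω ∂μ, Zfam θ.symm σ τ 1 ω = 0 → V ω = 0 := by
  set Z := Zfam θ.symm σ τ 1
  have hZterm := ae_Zterm_succ_le hθ hVr
  have hZV : ∀ᵐ ω ∂μ, Z ω ≤ V ω := by
    filter_upwards [hZterm, hV0] with ω h h0
    exact Zfam_one_le_of_Zterm_succ_le _ σ τ h0 h
  have hZsub : ∀ᵐ ω ∂μ, pos (max (Z ω) (σ ω) - τ ω) ≤ Z (θ ω) := by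
    filter_upwards [hθ.quasiMeasurePreserving.ae hZterm, hτ0] with ω h hτω
    have hbdd : BddAbove (Set.range fun k : {k : ℕ // 1 ≤ k} => Zterm θ.symm σ τ k (θ ω)) := by
      refine ⟨V (θ ω), ?_⟩
      rintro _ ⟨⟨k, hk⟩, rfl⟩
      obtain ⟨k, rfl⟩ := Nat.exists_eq_add_of_le' hk
      exact h k
    simpa using pos_max_Zfam_sub_le_Zfam θ.symm σ τ hbdd (by simpa using hτω.le)
  have hW : (V - Z) ∘ θ =ᵐ[μ] V - Z := by
    refine hθ.comp_ae_eq_of_comp_ae_le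
      (hV.sub (aemeasurable_Zfam hθ hσ hτ 1)).aestronglyMeasurable ?_
    filter_upwards [hVr, hZV, hZsub] with ω hVω hZVω hZω
    have := pos_max_sub_pos_max_le (s := σ ω) (t := τ ω) hZVω
    simp only [comp_apply, Pi.sub_apply, hVω]
    linarith
  filter_upwards [hW, hVr, hZsub, hτ0, hV0] with ω hWω hVω hZω hτω hV0ω hZ0
  simp only [comp_apply, Pi.sub_apply, hVω, hZ0] at hWω hZω
  exact eq_zero_of_le_pos_sub_pos hV0ω hτω (by linarith)

end Lindley

theorem ae_Psi_solution_eq_zero_of_Zfam_eq_zero {Ω : Type*} [MeasurableSpace Ω] {μ : Measure Ω}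
    [IsFiniteMeasure μ] {θ : Ω ≃ᵐ Ω} (hθ : MeasurePreserving θ μ μ) {σ τ : Ω → ℝ}
    (hσ : AEMeasurable σ μ) (hτ : AEMeasurable τ μ) (hτ0 : ∀ᵐ ω ∂μ, 0 < τ ω) {n : ℕ}
    {Y : Ω → Fin (n + 1) → ℝ} (hY : AEMeasurable Y μ) (hYs : ∀ᵐ ω ∂μ, OSorted (Y ω))
    (hYr : ∀ᵐ ω ∂μ, Y (θ ω) = Psi (n + 1) (σ ω) (τ ω) (Y ω)) :
    ∀ᵐ ω ∂μ, Zfam θ.symm σ τ 1 ω = 0 → Y ω = 0 := by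
  have hlast := ae_eq_zero_of_Zfam_eq_zero hθ hσ hτ hτ0 (hY.eval (Fin.last n))
    (hYs.mono fun ω h => h.1 _) (hYr.mono fun ω h => by rw [h, Psi_last])
  filter_upwards [hlast, hYs] with ω hω hsorted hZ
  funext j
  exact le_antisymm ((hsorted.2 (Fin.le_last j)).trans (hω hZ).le) (hsorted.1 j)

theorem stmt6_general {Ω : Type*} [MeasurableSpace Ω] (μ : MeasureTheory.Measure Ω)
    [MeasureTheory.IsProbabilityMeasure μ]
    (θ : Ω ≃ᵐ Ω) (hergo : Ergodic (⇑θ) μ)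
    (σ τ : Ω → ℝ) (hσint : MeasureTheory.Integrable σ μ) (hτint : MeasureTheory.Integrable τ μ)
    (hτ0 : ∀ᵐ ω ∂μ, 0 < τ ω)
    (p : ℕ)
    (hZ1 : 0 < μ {ω | Zfam (⇑θ.symm) σ τ 1 ω = 0})
    (Y Y' : Ω → Fin p → ℝ) (hYm : Measurable Y) (hY'm : Measurable Y')
    (hYs : ∀ᵐ ω ∂μ, OSorted (Y ω)) (hY's : ∀ᵐ ω ∂μ, OSorted (Y' ω))
    (hYr : ∀ᵐ ω ∂μ, Y (θ ω) = Psi p (σ ω) (τ ω) (Y ω))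
    (hY'r : ∀ᵐ ω ∂μ, Y' (θ ω) = Psi p (σ ω) (τ ω) (Y' ω)) :
    Y =ᵐ[μ] Y' := by
  rcases p with _ | n
  · exact ae_of_all _ fun _ => Subsingleton.elim _ _
  have hθ := hergo.toMeasurePreserving
  have hY0 := ae_Psi_solution_eq_zero_of_Zfam_eq_zero hθ hσint.aemeasurable hτint.aemeasurable
    hτ0 hYm.aemeasurable hYs hYr
  have hY'0 := ae_Psi_solution_eq_zero_of_Zfam_eq_zero hθ hσint.aemeasurable hτint.aemeasurable
    hτ0 hY'm.aemeasurable hY's hY'r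
  set D := fun ω => dist (Y ω) (Y' ω)
  have hD : D ∘ θ =ᵐ[μ] D := by
    refine hθ.comp_ae_eq_of_comp_ae_le (hYm.dist hY'm).aestronglyMeasurable ?_
    filter_upwards [hYr, hY'r] with ω h h'
    simpa only [comp_apply, D, h, h'] using dist_Psi_le _ _ _ (Y ω) (Y' ω)
  obtain ⟨c, hc⟩ := hergo.ae_eq_const_of_ae_eq_comp_ae (hYm.dist hY'm).aestronglyMeasurable hD
  obtain ⟨ω, hZω, hcω, hYω, hY'ω⟩ := Measure.exists_mem_of_measure_ne_zero_of_ae hZ1.ne'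
    (ae_restrict_of_ae (hc.and (hY0.and hY'0)))
  have hc0 : c = 0 := by simpa [D, hYω hZω, hY'ω hZω] using hcω.symm
  filter_upwards [hc] with ω hω
  exact dist_eq_zero.1 (hω.trans hc0)

theorem stmt6 {Ω : Type*} [MeasurableSpace Ω] (μ : MeasureTheory.Measure Ω)
    [MeasureTheory.IsProbabilityMeasure μ]
    (θ : Ω ≃ᵐ Ω) (hergo : Ergodic (⇑θ) μ)
    (σ τ : Ω → ℝ) (hσint : MeasureTheory.Integrable σ μ) (hτint : MeasureTheory.Integrable τ μ)
    (hσ0 : ∀ᵐ ω ∂μ, 0 ≤ σ ω) (hτ0 : ∀ᵐ ω ∂μ, 0 < τ ω)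
    (p : ℕ) (hp : 1 ≤ p)
    (hZ1 : 0 < μ {ω | Zfam (⇑θ.symm) σ τ 1 ω = 0})
    (Y Y' : Ω → Fin p → ℝ) (hYm : Measurable Y) (hY'm : Measurable Y')
    (hYs : ∀ᵐ ω ∂μ, OSorted (Y ω)) (hY's : ∀ᵐ ω ∂μ, OSorted (Y' ω))
    (hYr : ∀ᵐ ω ∂μ, Y (θ ω) = Psi p (σ ω) (τ ω) (Y ω))
    (hY'r : ∀ᵐ ω ∂μ, Y' (θ ω) = Psi p (σ ω) (τ ω) (Y' ω)) :
    Y =ᵐ[μ] Y' :=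
  stmt6_general μ θ hergo σ τ hσint hτint hτ0 p hZ1 Y Y' hYm hY'm hYs hY's hYr hY'r
end

section
/- Let (Ω, F, P, θ) be a stationary ergodic quadruple carrying σ, τ as in the context, and let S ≥ 2, 1 ≤ p ≤ S−1. Define the Loynes sequences V_0 = 0 ∈ ℝ^S, V_{n+1} = (Φ^p∘θ^{−1})(V_n∘θ^{−1}) and Y_0 = 0 ∈ ℝ^p, Y_{n+1} = (Ψ^p∘θ^{−1})(Y_n∘θ^{−1}) (i.e. V_{n+1}(ω) is the map Φ^p evaluated at the sample θ^{−1}ω applied to V_n(θ^{−1}ω), and similarly for Y). Then for every n ∈ ℕ, V_n(j) ≤ Y_n(j) almost surely for all j ∈ {1,…,p}; consequently the almost sure coordinatewise limits V^p and Y^p of these (nondecreasing) sequences satisfy V^p(j) ≤ Y^p(j) a.s. for all j ∈ {1,…,p}. -/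
open MeasureTheory ProbabilityTheory Filter

theorem pos_le_pos {x y : ℝ} (h : x ≤ y) : pos x ≤ pos y :=
  max_le_max_right 0 h

/-- On the coordinates `1, …, p` the two maps have the same monotone formula, except that at
coordinate `p` the map `Ψ^p` drops the cap `u(p+1)` that `Φ^p` still applies. -/
theorem Phi_castLE_le_Psi {S p : ℕ} (hp : p < S) (σ τ : ℝ) {u : Fin S → ℝ} {v : Fin p → ℝ}
    (huv : ∀ j : Fin p, u (Fin.castLE hp.le j) ≤ v j) (j : Fin p) :
    Phi S p hp σ τ u (Fin.castLE hp.le j) ≤ Psi p σ τ v j := by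
  have hjS : (j : ℕ) + 1 < S := by omega
  simp only [Phi, Psi, Fin.val_castLE, dif_pos hjS, if_pos j.isLt]
  have hmax : max (u (Fin.castLE hp.le j)) σ ≤ max (v j) σ := max_le_max_right σ (huv j)
  split_ifs with hjp
  · refine pos_le_pos (sub_le_sub_right (min_le_min hmax ?_) τ)
    simpa using huv ⟨(j : ℕ) + 1, hjp⟩
  · exact pos_le_pos (sub_le_sub_right ((min_le_left _ _).trans hmax) τ)

theorem stmt11 {Ω : Type*} [MeasurableSpace Ω] (μ : MeasureTheory.Measure Ω)
    (θ : Ω ≃ᵐ Ω)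
    (σ τ : Ω → ℝ)
    (S p : ℕ) (hp1 : 1 ≤ p) (hpS : p ≤ S - 1)
    (V : ℕ → Ω → Fin S → ℝ) (Y : ℕ → Ω → Fin p → ℝ)
    (hV0 : ∀ ω, V 0 ω = fun _ => 0)
    (hVrec : ∀ n ω, V (n + 1) ω =
      Phi S p (by omega) (σ (θ.symm ω)) (τ (θ.symm ω)) (V n (θ.symm ω)))
    (hY0 : ∀ ω, Y 0 ω = fun _ => 0)
    (hYrec : ∀ n ω, Y (n + 1) ω = Psi p (σ (θ.symm ω)) (τ (θ.symm ω)) (Y n (θ.symm ω))) :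
    (∀ n : ℕ, ∀ᵐ ω ∂μ, ∀ j : Fin p, V n ω (Fin.castLE (by omega) j) ≤ Y n ω j) ∧
    (∀ Vlim : Ω → Fin S → ℝ, ∀ Ylim : Ω → Fin p → ℝ,
      (∀ᵐ ω ∂μ, ∀ i : Fin S, Filter.Tendsto (fun n => V n ω i) Filter.atTop (nhds (Vlim ω i))) →
      (∀ᵐ ω ∂μ, ∀ i : Fin p, Filter.Tendsto (fun n => Y n ω i) Filter.atTop (nhds (Ylim ω i))) →
      ∀ᵐ ω ∂μ, ∀ j : Fin p, Vlim ω (Fin.castLE (by omega) j) ≤ Ylim ω j) := by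
  have hp : p < S := by omega
  have hVY : ∀ n ω, ∀ j : Fin p, V n ω (Fin.castLE hp.le j) ≤ Y n ω j := by
    intro n
    induction n with
    | zero => simp [hV0, hY0]
    | succ n ih =>
      intro ω
      rw [hVrec, hYrec]
      exact Phi_castLE_le_Psi hp _ _ (ih (θ.symm ω))
  refine ⟨fun n => .of_forall (hVY n), fun Vlim Ylim hVlim hYlim => ?_⟩
  filter_upwards [hVlim, hYlim] with ω hVω hYω j
  exact le_of_tendsto_of_tendsto' (hVω _) (hYω j) (hVY · ω j)
end
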